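/- arXiv:2503.06191 — 4 statements merged into one kernel-verified Lean document; each statement's English description precedes it below -/
import Mathlib

section
/- For any convex body $K\subset\mathbb{R}^n$ containing the origin, the polar of the difference body satisfies $\mathrm{vol}_n((DK)^\circ) \le 2^{-n}\,\mathrm{vol}_n(K^\circ)$, where $DK=K+(-K)$. -/
open MeasureTheory Pointwise RealInnerProductSpace

noncomputable abbrev E (n : ℕ) := EuclideanSpace ℝ (Fin n)

/-- The polar body `K° = {x : ⟨x,y⟩ ≤ 1 ∀ y ∈ K}`. -/
def polarBody {V : Type*} [NormedAddCommGroup V] [InnerProductSpace ℝ V] (K : Set V) :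
    Set V :=
  {x | ∀ y ∈ K, ⟪x, y⟫ ≤ 1}

/-!
Write `h` for the support function of `K`, so that `K° = {h ≤ 1}` and
`(K - K)° = {x | h x + h (-x) ≤ 1}`. For a nonnegative positively 1-homogeneous `g`, the
layer-cake formula gives `∫ e^{-g} = n! vol {g ≤ 1}`. The claim therefore becomes
`∫ e^{-h(x) - h(-x)} ≤ ∫ e^{-2h(x)}`, which is Cauchy–Schwarz for `e^{-h}` and `e^{-h(-·)}`
together with the symmetry of Lebesgue measure; and `2h` is the support function of `2K`, whose
polar `2⁻¹ • K°` has volume `2⁻ⁿ vol K°`.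
-/

open Real Set Module Bornology
open scoped ENNReal Nat

theorem lintegral_Ici_exp_neg (a : ℝ) :
    ∫⁻ t in Ici a, ENNReal.ofReal (exp (-t)) = ENNReal.ofReal (exp (-a)) := by
  rw [← setLIntegral_congr Ioi_ae_eq_Ici, ← integral_exp_neg_Ioi,
    ofReal_integral_eq_lintegral_ofReal (integrableOn_exp_neg_Ioi a)
      (Filter.Eventually.of_forall fun t => (exp_pos _).le)]

theorem lintegral_Ioi_exp_neg_mul_pow (n : ℕ) :
    ∫⁻ t in Ioi (0 : ℝ), ENNReal.ofReal (exp (-t) * t ^ n) = n ! := by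
  have hGamma : ∫ t in Ioi (0 : ℝ), exp (-t) * t ^ n = n ! := by
    rw [← Gamma_nat_eq_factorial, Gamma_eq_integral (by positivity)]
    simp_rw [add_sub_cancel_right, rpow_natCast]
  have hint : IntegrableOn (fun t : ℝ => exp (-t) * t ^ n) (Ioi 0) := by
    simpa [rpow_natCast] using GammaIntegral_convergent (s := (n : ℝ) + 1) (by positivity)
  rw [← ofReal_integral_eq_lintegral_ofReal hint, hGamma, ENNReal.ofReal_natCast]
  filter_upwards [ae_restrict_mem measurableSet_Ioi] with t (ht : 0 < t)
  positivity

section Homogeneous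

variable {V : Type*} [NormedAddCommGroup V] [NormedSpace ℝ V] {g : V → ℝ}

theorem setOf_le_eq_smul_setOf_le_one (hg : ∀ t : ℝ, 0 < t → ∀ x, g (t • x) = t * g x)
    {t : ℝ} (ht : 0 < t) : {x | g x ≤ t} = t • {x | g x ≤ 1} := by
  ext x
  rw [mem_smul_set_iff_inv_smul_mem₀ ht.ne']
  simp [hg _ (inv_pos.2 ht), inv_mul_le_one₀ ht]

variable [MeasurableSpace V] [BorelSpace V] [FiniteDimensional ℝ V] (μ : Measure V)
  [μ.IsAddHaarMeasure]

theorem addHaar_setOf_le_of_homogeneous (hg : ∀ t : ℝ, 0 < t → ∀ x, g (t • x) = t * g x)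
    {t : ℝ} (ht : 0 < t) :
    μ {x | g x ≤ t} = ENNReal.ofReal (t ^ finrank ℝ V) * μ {x | g x ≤ 1} := by
  rw [setOf_le_eq_smul_setOf_le_one hg ht, Measure.addHaar_smul, abs_of_pos (pow_pos ht _)]

theorem lintegral_exp_neg_of_homogeneous (hg_meas : Measurable g) (hg0 : ∀ x, 0 ≤ g x)
    (hg : ∀ t : ℝ, 0 < t → ∀ x, g (t • x) = t * g x) :
    ∫⁻ x, ENNReal.ofReal (exp (-g x)) ∂μ = (finrank ℝ V)! * μ {x | g x ≤ 1} := by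
  set e : ℝ → ℝ≥0∞ := fun t => ENNReal.ofReal (exp (-t))
  have he : Measurable e := by fun_prop
  have hF : Measurable (Function.uncurry fun x t => (Ici (g x)).indicator e t) := by
    simp only [Function.uncurry_def, indicator, mem_Ici]
    exact Measurable.ite (measurableSet_le (hg_meas.comp measurable_fst) measurable_snd)
      (he.comp measurable_snd) measurable_const
  calc ∫⁻ x, e (g x) ∂μ = ∫⁻ x, (∫⁻ t, (Ici (g x)).indicator e t) ∂μ := by
        simp_rw [lintegral_indicator measurableSet_Ici, e, lintegral_Ici_exp_neg]
    _ = ∫⁻ t, (∫⁻ x, (Ici (g x)).indicator e t ∂μ) :=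
        lintegral_lintegral_swap hF.aemeasurable
    _ = ∫⁻ t, e t * μ {x | g x ≤ t} := by
        refine lintegral_congr fun t => ?_
        rw [← lintegral_indicator_const (measurableSet_le hg_meas measurable_const)]
        rfl
    _ = ∫⁻ t in Ioi 0, ENNReal.ofReal (exp (-t) * t ^ finrank ℝ V) * μ {x | g x ≤ 1} := by
        rw [← lintegral_indicator measurableSet_Ioi]
        refine lintegral_congr_ae ?_
        filter_upwards [Measure.ae_ne volume 0] with t ht
        rcases ht.lt_or_gt with hneg | hpos
        · have h_empty : {x | g x ≤ t} = ∅ :=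
            eq_empty_of_forall_notMem fun x hx => (hg0 x).not_gt (hx.trans_lt hneg)
          simp [h_empty, hneg.not_gt]
        · rw [indicator_of_mem (mem_Ioi.2 hpos), addHaar_setOf_le_of_homogeneous μ hg hpos,
            ENNReal.ofReal_mul (exp_pos _).le, mul_assoc]
    _ = (finrank ℝ V)! * μ {x | g x ≤ 1} := by
        rw [lintegral_mul_const _ (by fun_prop), lintegral_Ioi_exp_neg_mul_pow]

end Homogeneous

theorem lintegral_mul_comp_neg_le_lintegral_sq {G : Type*} [MeasurableSpace G] [InvolutiveNeg G]
    [MeasurableNeg G] {μ : Measure G} [μ.IsNegInvariant] {f : G → ℝ≥0∞}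
    (hf : Measurable f) :
    ∫⁻ x, f x * f (-x) ∂μ ≤ ∫⁻ x, f x ^ 2 ∂μ := by
  calc ∫⁻ x, f x * f (-x) ∂μ
      ≤ (∫⁻ x, f x ^ (2 : ℝ) ∂μ) ^ (1 / 2 : ℝ) *
          (∫⁻ x, f (-x) ^ (2 : ℝ) ∂μ) ^ (1 / 2 : ℝ) :=
        ENNReal.lintegral_mul_le_Lp_mul_Lq μ HolderConjugate.two_two hf.aemeasurable
          (hf.comp measurable_neg).aemeasurable
    _ = ∫⁻ x, f x ^ 2 ∂μ := by
        rw [lintegral_neg_eq_self (fun x => f x ^ (2 : ℝ)),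
          ← ENNReal.rpow_add_of_nonneg _ _ (by norm_num) (by norm_num)]
        norm_num

theorem lintegral_exp_neg_add_comp_neg_le {G : Type*} [MeasurableSpace G] [InvolutiveNeg G]
    [MeasurableNeg G] {μ : Measure G} [μ.IsNegInvariant] {g : G → ℝ} (hg : Measurable g) :
    ∫⁻ x, ENNReal.ofReal (exp (-(g x + g (-x)))) ∂μ ≤
      ∫⁻ x, ENNReal.ofReal (exp (-(2 * g x))) ∂μ := by
  simp_rw [two_mul, neg_add, exp_add, ENNReal.ofReal_mul (exp_pos _).le, ← sq]
  exact lintegral_mul_comp_neg_le_lintegral_sq (by fun_prop)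

section SupportFunction

variable {V : Type*} [NormedAddCommGroup V] [InnerProductSpace ℝ V]

-- Junk value `0` unless `K` is nonempty and bounded above in every direction.
noncomputable def supportFunction (K : Set V) (x : V) : ℝ :=
  sSup ((fun y => ⟪x, y⟫) '' K)

variable {K A B : Set V} {x : V}

theorem Bornology.IsBounded.bddAbove_inner_image (hK : IsBounded K) (x : V) :
    BddAbove ((fun y => ⟪x, y⟫) '' K) :=
  ((innerSL ℝ x).lipschitz.isBounded_image hK).bddAbove

theorem inner_le_supportFunction (hK : IsBounded K) {y : V} (hy : y ∈ K) :
    ⟪x, y⟫ ≤ supportFunction K x :=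
  le_csSup (hK.bddAbove_inner_image x) (mem_image_of_mem _ hy)

theorem supportFunction_le_iff (hK : IsBounded K) (hne : K.Nonempty) {c : ℝ} :
    supportFunction K x ≤ c ↔ ∀ y ∈ K, ⟪x, y⟫ ≤ c := by
  rw [supportFunction, csSup_le_iff (hK.bddAbove_inner_image x) (hne.image _), forall_mem_image]

theorem supportFunction_nonneg (hK : IsBounded K) (h0 : (0 : V) ∈ K) :
    0 ≤ supportFunction K x := by
  simpa using inner_le_supportFunction (x := x) hK h0

theorem supportFunction_smul {t : ℝ} (ht : 0 ≤ t) :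
    supportFunction K (t • x) = t * supportFunction K x := by
  simp_rw [supportFunction, real_inner_smul_left, ← smul_eq_mul (a := t),
    ← Real.sSup_smul_of_nonneg ht, ← image_smul, image_image]

theorem supportFunction_smul_set {t : ℝ} :
    supportFunction (t • K) x = supportFunction K (t • x) := by
  simp_rw [supportFunction, ← image_smul, image_image, real_inner_smul_right,
    real_inner_smul_left]

theorem supportFunction_neg : supportFunction (-K) x = supportFunction K (-x) := by
  simp_rw [supportFunction, ← image_neg_eq_neg, image_image, inner_neg_right, inner_neg_left]

theorem supportFunction_add (hA : IsBounded A) (hA' : A.Nonempty) (hB : IsBounded B)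
    (hB' : B.Nonempty) :
    supportFunction (A + B) x = supportFunction A x + supportFunction B x := by
  have himage :
      (fun y => ⟪x, y⟫) '' (A + B) = (fun y => ⟪x, y⟫) '' A + (fun y => ⟪x, y⟫) '' B :=
    image_add (innerₛₗ ℝ x)
  rw [supportFunction, himage]
  exact csSup_add (hA'.image _) (hA.bddAbove_inner_image x) (hB'.image _)
    (hB.bddAbove_inner_image x)

theorem measurable_supportFunction [MeasurableSpace V] [OpensMeasurableSpace V]
    (hK : IsBounded K) : Measurable (supportFunction K) := by
  have hK_iSup : supportFunction K = fun x => ⨆ y : K, ⟪x, (y : V)⟫ := by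
    ext x
    rw [supportFunction, sSup_image']
  rw [hK_iSup]
  refine (lowerSemicontinuous_ciSup (fun x => ?_) fun y => ?_).measurable
  · rw [← image_eq_range]
    exact hK.bddAbove_inner_image x
  · exact (continuous_id.inner continuous_const).lowerSemicontinuous

theorem polarBody_eq_setOf_supportFunction_le (hK : IsBounded K) (hne : K.Nonempty) :
    polarBody K = {x | supportFunction K x ≤ 1} := by
  ext x
  exact (supportFunction_le_iff hK hne).symm

theorem polarBody_smul {t : ℝ} (ht : t ≠ 0) : polarBody (t • K) = t⁻¹ • polarBody K := by
  ext x
  rw [mem_smul_set_iff_inv_smul_mem₀ (inv_ne_zero ht), inv_inv]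
  simp [polarBody, ← image_smul, real_inner_smul_right, real_inner_smul_left]

variable [MeasurableSpace V] [BorelSpace V] [FiniteDimensional ℝ V] (μ : Measure V)
  [μ.IsAddHaarMeasure]

theorem lintegral_exp_neg_supportFunction (hK : IsBounded K) (h0 : (0 : V) ∈ K) :
    ∫⁻ x, ENNReal.ofReal (exp (-supportFunction K x)) ∂μ =
      (finrank ℝ V)! * μ (polarBody K) := by
  rw [lintegral_exp_neg_of_homogeneous μ (measurable_supportFunction hK)
    (fun _ => supportFunction_nonneg hK h0) (fun _ ht _ => supportFunction_smul ht.le),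
    polarBody_eq_setOf_supportFunction_le hK ⟨0, h0⟩]

theorem addHaar_polarBody_add_neg_le (hK : IsBounded K) (h0 : (0 : V) ∈ K) :
    μ (polarBody (K + -K)) ≤ ENNReal.ofReal (2⁻¹ ^ finrank ℝ V) * μ (polarBody K) := by
  have hne : K.Nonempty := ⟨0, h0⟩
  have h0D : (0 : V) ∈ K + -K := by simpa using add_mem_add h0 (neg_mem_neg.2 h0)
  have h02 : (0 : V) ∈ (2 : ℝ) • K := zero_mem_smul_set h0
  rw [← abs_of_pos (pow_pos (inv_pos.2 (two_pos : (0 : ℝ) < 2)) (finrank ℝ V)),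
    ← Measure.addHaar_smul, ← polarBody_smul two_ne_zero,
    ← ENNReal.mul_le_mul_iff_right (by positivity : ((finrank ℝ V)! : ℝ≥0∞) ≠ 0)
      (ENNReal.natCast_ne_top _),
    ← lintegral_exp_neg_supportFunction μ (hK.add hK.neg) h0D,
    ← lintegral_exp_neg_supportFunction μ (hK.smul₀ 2) h02]
  calc ∫⁻ x, ENNReal.ofReal (exp (-supportFunction (K + -K) x)) ∂μ
      = ∫⁻ x, ENNReal.ofReal (exp (-(supportFunction K x + supportFunction K (-x)))) ∂μ := by
        simp_rw [supportFunction_add hK hne hK.neg hne.neg, supportFunction_neg]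
    _ ≤ ∫⁻ x, ENNReal.ofReal (exp (-(2 * supportFunction K x))) ∂μ :=
        lintegral_exp_neg_add_comp_neg_le (measurable_supportFunction hK)
    _ = ∫⁻ x, ENNReal.ofReal (exp (-supportFunction ((2 : ℝ) • K) x)) ∂μ := by
        simp_rw [supportFunction_smul_set, supportFunction_smul zero_le_two]

end SupportFunction

theorem stmt7_general (n : ℕ) (K : Set (E n))
    (hKcpt : IsCompact K)
    (hK0 : (0 : E n) ∈ K) :
    volume (polarBody (K + -K)) ≤
      ENNReal.ofReal ((2 : ℝ) ^ (-(n : ℝ))) * volume (polarBody K) := by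
  have h := addHaar_polarBody_add_neg_le volume hKcpt.isBounded hK0
  rwa [finrank_euclideanSpace_fin, inv_pow, ← rpow_natCast, ← rpow_neg zero_le_two] at h

/-- For a convex body `K ∋ 0`, `vol((DK)°) ≤ 2⁻ⁿ vol(K°)`, where `DK = K + (-K)`. -/
theorem stmt7 (n : ℕ) (K : Set (E n))
    (hKcpt : IsCompact K) (hKcvx : Convex ℝ K) (hKint : (interior K).Nonempty)
    (hK0 : (0 : E n) ∈ K) :
    volume (polarBody (K + -K)) ≤
      ENNReal.ofReal ((2 : ℝ) ^ (-(n : ℝ))) * volume (polarBody K) :=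
  stmt7_general n K hKcpt hK0
end

section
/- Let $v\in\mathbb{S}^{n-1}$, $m\ge 1$, and let $L\subset\mathbb{R}^{nm}$ be an origin-symmetric convex body. With the fiber symmetrization $\bar S_v^m L$ and the adjoint fiber symmetrization $\bar S_v^{m,\circ}L$ defined with respect to the decomposition $\mathbb{R}^{nm}=v^m\oplus v^{\perp m}$, one has the inclusion $\bar S_v^{m,\circ}(L^\circ) \subseteq (\bar S_v^m L)^\circ$. -/
open RealInnerProductSpace

/-- The `m`th-order fiber symmetrization of `L ⊂ (ℝⁿ)ᵐ` in direction `v`. -/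
def fiberSym (n m : ℕ) (v : E n) (L : Set (Fin m → E n)) : Set (Fin m → E n) :=
  {z | ∃ x : Fin m → E n, ∃ s₁ s₂ : Fin m → ℝ,
    (∀ i, ⟪x i, v⟫ = 0) ∧
    (x + fun i => s₁ i • v) ∈ L ∧ (x + fun i => s₂ i • v) ∈ L ∧
    z = x + fun i => ((s₁ i - s₂ i) / 2) • v}

/-- The adjoint `m`th-order fiber symmetrization of `L ⊂ (ℝⁿ)ᵐ` in direction `v`. -/
def fiberSymAdj (n m : ℕ) (v : E n) (L : Set (Fin m → E n)) : Set (Fin m → E n) :=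
  {z | ∃ x₁ x₂ : Fin m → E n, ∃ s : Fin m → ℝ,
    (∀ i, ⟪x₁ i, v⟫ = 0) ∧ (∀ i, ⟪x₂ i, v⟫ = 0) ∧
    (x₁ + fun i => s i • v) ∈ L ∧ (x₂ + fun i => s i • v) ∈ L ∧
    z = (2 : ℝ)⁻¹ • (x₁ - x₂) + fun i => s i • v}

/-- The polar of `L ⊂ (ℝⁿ)ᵐ` with respect to the sum-of-blocks inner product. -/
def polarPi (n m : ℕ) (L : Set (Fin m → E n)) : Set (Fin m → E n) :=
  {x | ∀ y ∈ L, ∑ i, ⟪x i, y i⟫ ≤ 1}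

/-- For an origin-symmetric convex body `L ⊂ ℝⁿᵐ` and a unit vector `v`,
`S̄ᵥᵐ'°(L°) ⊆ (S̄ᵥᵐ L)°`. -/
theorem stmt10 (n m : ℕ) (hm : 1 ≤ m) (v : E n) (hv : ‖v‖ = 1)
    (L : Set (Fin m → E n)) (hLcpt : IsCompact L) (hLcvx : Convex ℝ L)
    (hLint : (interior L).Nonempty) (hLsym : L = -L) :
    fiberSymAdj n m v (polarPi n m L) ⊆ polarPi n m (fiberSym n m v L) := by
  have hvv : ⟪v, v⟫ = 1 := by
    rw [real_inner_self_eq_norm_sq, hv]; norm_num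
  have key : ∀ (a b : E n) (α β : ℝ), ⟪a, v⟫ = 0 → ⟪b, v⟫ = 0 →
      ⟪a + α • v, b + β • v⟫ = ⟪a, b⟫ + α * β := by
    intro a b α β ha hb
    have hvb : ⟪v, b⟫ = 0 := by rw [real_inner_comm]; exact hb
    rw [inner_add_left, inner_add_right, inner_add_right, real_inner_smul_right,
      real_inner_smul_left, real_inner_smul_left, real_inner_smul_right,
      ha, hvb, hvv]
    ring
  rintro z ⟨x₁, x₂, s, hx₁, hx₂, h₁, h₂, rfl⟩
  rintro y ⟨x, t₁, t₂, hx, hy₁, hy₂, rfl⟩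
  have hneg : -(x + fun i => t₂ i • v) ∈ L := by
    rw [hLsym]; exact Set.neg_mem_neg.mpr hy₂
  have A := h₁ _ hy₁
  have B := h₂ _ hneg
  have hA : ∑ i, (⟪x₁ i, x i⟫ + s i * t₁ i) ≤ 1 := by
    refine le_trans (le_of_eq ?_) A
    refine Finset.sum_congr rfl fun i _ => ?_
    simp only [Pi.add_apply]
    exact (key _ _ _ _ (hx₁ i) (hx i)).symm
  have hB : ∑ i, (-⟪x₂ i, x i⟫ + s i * (-t₂ i)) ≤ 1 := by
    refine le_trans (le_of_eq ?_) B
    refine Finset.sum_congr rfl fun i _ => ?_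
    simp only [Pi.add_apply, Pi.neg_apply, neg_add]
    have : -(x i) + -(t₂ i • v) = -(x i) + (-(t₂ i)) • v := by
      rw [neg_smul]
    rw [this, key (x₂ i) (-(x i)) (s i) (-(t₂ i)) (hx₂ i) (by
      rw [inner_neg_left, hx i, neg_zero]), inner_neg_right]
  have hgoal : ∑ i, ⟪((2 : ℝ)⁻¹ • (x₁ - x₂) + fun i => s i • v) i,
      ((x + fun i => ((t₁ i - t₂ i) / 2) • v)) i⟫
      = ∑ i, ((2:ℝ)⁻¹ * (⟪x₁ i, x i⟫ + s i * t₁ i)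
        + (2:ℝ)⁻¹ * (-⟪x₂ i, x i⟫ + s i * (-t₂ i))) := by
    refine Finset.sum_congr rfl fun i _ => ?_
    simp only [Pi.add_apply, Pi.smul_apply, Pi.sub_apply]
    rw [key ((2:ℝ)⁻¹ • (x₁ i - x₂ i)) (x i) (s i) ((t₁ i - t₂ i) / 2)
      (by rw [real_inner_smul_left, inner_sub_left, hx₁ i, hx₂ i]; ring) (hx i)]
    rw [real_inner_smul_left, inner_sub_left]
    ring
  rw [hgoal, Finset.sum_add_distrib, ← Finset.mul_sum, ← Finset.mul_sum]
  nlinarith [hA, hB]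
end

section
/- Let $A_0,A_1,\dots,A_m$ be positive-definite symmetric $n\times n$ real matrices and let $M$ be the $nm\times nm$ block matrix with diagonal blocks $A_i+A_0$ ($i=1,\dots,m$) and all off-diagonal blocks equal to $A_0$. Then $\det(M) = \prod_{i=0}^m\det(A_i)\cdot\det\left(\sum_{i=0}^m A_i^{-1}\right)$. -/
open Matrix

/-- Determinant of the block matrix with diagonal blocks `Aᵢ + A₀` and off-diagonal
blocks `A₀`: `det M = ∏ det(Aᵢ) ⋅ det(∑ Aᵢ⁻¹)`. -/
theorem stmt13 (n m : ℕ) (A : Fin (m + 1) → Matrix (Fin n) (Fin n) ℝ)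
    (hA : ∀ i, (A i).PosDef) :
    (Matrix.of fun (p q : Fin m × Fin n) =>
        if p.1 = q.1 then (A p.1.succ + A 0) p.2 q.2 else (A 0) p.2 q.2).det =
      (∏ i, (A i).det) * (∑ i, (A i)⁻¹).det := by
  classical
  set M : Matrix (Fin m × Fin n) (Fin m × Fin n) ℝ :=
    Matrix.of fun (p q : Fin m × Fin n) =>
      if p.1 = q.1 then (A p.1.succ + A 0) p.2 q.2 else (A 0) p.2 q.2 with hM
  have hdet0 : ∀ i, IsUnit (A i).det := fun i =>
    isUnit_iff_ne_zero.mpr (hA i).det_pos.ne'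
  -- the reindexing equivalence
  let e : (Fin n × Fin m) ≃ (Fin m × Fin n) := Equiv.prodComm _ _
  let D : Matrix (Fin m × Fin n) (Fin m × Fin n) ℝ :=
    (Matrix.blockDiagonal fun i => A i.succ).reindex e e
  let E : Matrix (Fin m × Fin n) (Fin m × Fin n) ℝ :=
    (Matrix.blockDiagonal fun i => (A i.succ)⁻¹).reindex e e
  let U : Matrix (Fin m × Fin n) (Fin n) ℝ := Matrix.of fun p k => if p.2 = k then 1 else 0
  have hDE : D * E = 1 := by
    show (Matrix.blockDiagonal fun i => A i.succ).submatrix e.symm e.symm *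
      (Matrix.blockDiagonal fun i => (A i.succ)⁻¹).submatrix e.symm e.symm = 1
    rw [Matrix.submatrix_mul_equiv, ← Matrix.blockDiagonal_mul]
    have : (fun i : Fin m => A i.succ * (A i.succ)⁻¹) = fun _ => (1 : Matrix (Fin n) (Fin n) ℝ) := by
      funext i; exact Matrix.mul_nonsing_inv _ (hdet0 i.succ)
    rw [this]
    rw [show (fun _ : Fin m => (1 : Matrix (Fin n) (Fin n) ℝ)) = 1 from rfl, Matrix.blockDiagonal_one, Matrix.submatrix_one_equiv]
  have hMsplit : M = D + U * A 0 * Uᵀ := by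
    ext p q
    have hU : (U * A 0 * Uᵀ) p q = A 0 p.2 q.2 := by
      simp [U, Matrix.mul_apply, Matrix.transpose_apply, ite_and,
        Finset.sum_ite_eq', Finset.sum_ite_eq]
    simp only [Matrix.add_apply, hU]
    by_cases h : p.1 = q.1 <;>
      simp [hM, D, e, Matrix.blockDiagonal_apply, h, Matrix.add_apply]
  have hUEU : Uᵀ * (E * U) = ∑ i : Fin m, (A i.succ)⁻¹ := by
    ext k l
    simp only [Matrix.mul_apply, Matrix.transpose_apply, U, Matrix.of_apply,
      Matrix.sum_apply]
    rw [Fintype.sum_prod_type]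
    simp [E, e, Matrix.blockDiagonal_apply, Finset.sum_ite_eq', Finset.mul_sum,
      Fintype.sum_prod_type, ite_and]
  have hdetD : D.det = ∏ i : Fin m, (A i.succ).det := by
    show ((Matrix.blockDiagonal fun i => A i.succ).submatrix e.symm e.symm).det = _
    rw [Matrix.det_submatrix_equiv_self, Matrix.det_blockDiagonal]
  -- main computation
  have key : M = D * (1 + (E * U * A 0) * Uᵀ) := by
    rw [Matrix.mul_add, Matrix.mul_one, hMsplit]
    congr 1
    rw [← Matrix.mul_assoc, ← Matrix.mul_assoc, ← Matrix.mul_assoc, hDE, Matrix.one_mul]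
  rw [key, Matrix.det_mul, Matrix.det_one_add_mul_comm, hdetD]
  have h2 : Uᵀ * (E * U * A 0) = (∑ i : Fin m, (A i.succ)⁻¹) * A 0 := by
    rw [← Matrix.mul_assoc, ← Matrix.mul_assoc, Matrix.mul_assoc Uᵀ, hUEU]
  rw [h2]
  have h3 : (1 : Matrix (Fin n) (Fin n) ℝ) + (∑ i : Fin m, (A i.succ)⁻¹) * A 0 =
      (∑ i : Fin (m + 1), (A i)⁻¹) * A 0 := by
    rw [Fin.sum_univ_succ, Matrix.add_mul, Matrix.nonsing_inv_mul _ (hdet0 0)]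
  rw [h3, Matrix.det_mul, Fin.prod_univ_succ]
  ring
end

section
/- Let $m\ge 1$ and let $K\subset\mathbb{R}^n$ be a convex body. Then $\mathrm{vol}_{n(m+1)}(D^{m+1}(K))^m \le \mathrm{vol}_{nm}(D^m(K))^{m+1}$; equivalently, $S_{n,m+1}(K)^m\le S_{n,m}(K)^{m+1}$ where $S_{n,m}(K)=\mathrm{vol}_{nm}(D^m(K))\,\mathrm{vol}_n(K)^{-m}$. -/
open MeasureTheory Pointwise

/-- The `m`th-order difference body of a convex body `K ⊂ ℝⁿ`. -/
def Dm (n m : ℕ) (K : Set (E n)) : Set (Fin m → E n) :=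
  {x | (K ∩ ⋂ i, (x i +ᵥ K)).Nonempty}

/-!
Deleting the `j`-th block of coordinates maps `D^{m+1}(K)` into `D^m(K)`: a common point of `K`
and all the translates `x i +ᵥ K` is also a common point of those that remain. Since
`(ℝⁿ)^{m+1}` is the product of `m + 1` copies of the measure space `ℝⁿ`, the Loomis–Whitney
inequality `μ(S)^m ≤ ∏ⱼ μ(πⱼ S)` for the `m + 1` maps `πⱼ` deleting one factor gives the
claim.

The Loomis–Whitney inequality is proved in its functional form by induction on `m`: split off
one factor, use Hölder's inequality and the induction hypothesis in the remaining variables,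
then the generalized Hölder inequality in the split-off variable.
-/

section LoomisWhitney

open ENNReal

variable {α : Type*} [MeasurableSpace α] {μ : Measure α}

lemma Fin.removeNth_succ_cons {β : Type*} {k : ℕ} (t : β) (y : Fin (k + 1) → β)
    (i : Fin (k + 1)) :
    i.succ.removeNth (Fin.cons t y : Fin (k + 2) → β) = Fin.cons t (i.removeNth y) :=
  Fin.cons_comp_succ_succAbove t y i

@[fun_prop]
lemma Measurable.fin_cons {β : Type*} [MeasurableSpace β] {k : ℕ} {f : β → α}
    {g : β → Fin k → α} (hf : Measurable f) (hg : Measurable g) :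
    Measurable fun b => (Fin.cons (f b) (g b) : Fin (k + 1) → α) :=
  measurable_pi_lambda _ fun i => i.cases (by simpa using hf) fun j => by
    simpa only [Fin.cons_succ] using measurable_pi_iff.1 hg j

@[fun_prop]
lemma measurable_removeNth {k : ℕ} (j : Fin (k + 1)) :
    Measurable fun x : Fin (k + 1) → α => j.removeNth x :=
  measurable_pi_lambda _ fun _ => measurable_pi_apply _

variable (μ) in
def LoomisWhitneyIneq (k : ℕ) : Prop :=
  ∀ f : Fin (k + 1) → (Fin k → α) → ℝ≥0∞, (∀ j, Measurable (f j)) →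
    ∫⁻ x, ∏ j, f j (j.removeNth x) ^ (k : ℝ)⁻¹ ∂.pi (fun _ => μ)
      ≤ ∏ j, (∫⁻ y, f j y ∂.pi (fun _ => μ)) ^ (k : ℝ)⁻¹

lemma LoomisWhitneyIneq.lintegral_rpow_mul_prod_le {k : ℕ} (hk : k ≠ 0)
    (h : LoomisWhitneyIneq μ k) {f : (Fin (k + 1) → α) → ℝ≥0∞} (hf : Measurable f)
    {g : Fin (k + 1) → (Fin k → α) → ℝ≥0∞} (hg : ∀ i, Measurable (g i)) :
    ∫⁻ y, f y ^ ((k : ℝ) + 1)⁻¹ * ∏ i, g i (i.removeNth y) ^ ((k : ℝ) + 1)⁻¹ ∂.pi (fun _ => μ)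
      ≤ (∫⁻ y, f y ∂.pi (fun _ => μ)) ^ ((k : ℝ) + 1)⁻¹
        * ∏ i, (∫⁻ z, g i z ∂.pi (fun _ => μ)) ^ ((k : ℝ) + 1)⁻¹ := by
  set q : ℝ := ((k : ℝ) + 1)⁻¹ with hq_def
  have hqr : q + (k : ℝ) * q = 1 := by rw [hq_def]; field_simp; ring
  set r : ℝ := (k : ℝ) * q
  have hq : 0 ≤ q := by positivity
  have hr : 0 ≤ r := by positivity
  have hk0 : (k : ℝ) ≠ 0 := Nat.cast_ne_zero.2 hk
  have hprod : ∀ a : Fin (k + 1) → ℝ≥0∞, ∏ i, a i ^ q = (∏ i, a i ^ (k : ℝ)⁻¹) ^ r := fun a => by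
    simp only [← prod_rpow_of_nonneg hr, ← rpow_mul, r, inv_mul_cancel_left₀ hk0]
  calc ∫⁻ y, f y ^ q * ∏ i, g i (i.removeNth y) ^ q ∂.pi (fun _ => μ)
      = ∫⁻ y, f y ^ q * (∏ i, g i (i.removeNth y) ^ (k : ℝ)⁻¹) ^ r ∂.pi (fun _ => μ) := by
        simp only [hprod]
    _ ≤ (∫⁻ y, f y ∂.pi (fun _ => μ)) ^ q
          * (∫⁻ y, ∏ i, g i (i.removeNth y) ^ (k : ℝ)⁻¹ ∂.pi (fun _ => μ)) ^ r :=
        lintegral_mul_norm_pow_le hf.aemeasurable (by fun_prop) hq hr hqr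
    _ ≤ (∫⁻ y, f y ∂.pi (fun _ => μ)) ^ q
          * (∏ i, (∫⁻ z, g i z ∂.pi (fun _ => μ)) ^ (k : ℝ)⁻¹) ^ r := by
        gcongr
        exact h g hg
    _ = _ := by rw [hprod]

variable [SigmaFinite μ]

lemma lintegral_pi_fin_succ {k : ℕ} {F : (Fin (k + 1) → α) → ℝ≥0∞} (hF : Measurable F) :
    ∫⁻ x, F x ∂.pi (fun _ => μ) = ∫⁻ t, ∫⁻ y, F (Fin.cons t y) ∂.pi (fun _ => μ) ∂μ := by
  have e := (measurePreserving_piFinSuccAbove (fun _ : Fin (k + 1) => μ) 0).symm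
  have he : ⇑(MeasurableEquiv.piFinSuccAbove (fun _ => α) 0).symm
      = fun p : α × (Fin k → α) => (Fin.cons p.1 p.2 : Fin (k + 1) → α) := by
    ext p
    simp [MeasurableEquiv.piFinSuccAbove_symm_apply, Fin.insertNthEquiv, Fin.insertNth_zero']
  rw [← e.lintegral_comp_emb (MeasurableEquiv.measurableEmbedding _), he,
    lintegral_prod _ (by fun_prop)]


lemma loomisWhitneyIneq_one : LoomisWhitneyIneq μ 1 := by
  intro f hf
  have hconst : ∀ (t : α) (z : Fin 0 → α), (Fin.cons t z : Fin 1 → α) = fun _ => t :=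
    fun t z => funext fun i => by rw [Fin.fin_one_eq_zero i, Fin.cons_zero]
  rw [lintegral_pi_fin_succ (by fun_prop)]
  simp only [Nat.cast_one, inv_one, rpow_one, Fin.prod_univ_succ, Fin.prod_univ_zero, mul_one,
    Fin.removeNth_zero, Fin.tail_cons, Fin.removeNth_succ_cons, hconst]
  simp_rw [lintegral_mul_const _ (hf 0)]
  rw [lintegral_const_mul _ (by fun_prop)]
  have h1 := (measurePreserving_funUnique μ (Fin 1)).symm.lintegral_comp (hf (Fin.succ 0))
  exact (congrArg _ h1).le

lemma LoomisWhitneyIneq.succ {k : ℕ} (hk : k ≠ 0) (h : LoomisWhitneyIneq μ k) :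
    LoomisWhitneyIneq μ (k + 1) := by
  intro f hf
  set q : ℝ := ((k : ℝ) + 1)⁻¹ with hq_def
  have hq : ((k + 1 : ℕ) : ℝ)⁻¹ = q := by push_cast; rfl
  rw [hq]
  have hsplit : ∀ (t : α) (y : Fin (k + 1) → α),
      ∏ j, f j (j.removeNth (Fin.cons t y : Fin (k + 2) → α)) ^ q
        = f 0 y ^ q * ∏ i : Fin (k + 1), f i.succ (Fin.cons t (i.removeNth y)) ^ q := by
    intro t y
    simp only [Fin.prod_univ_succ (n := k + 1), Fin.removeNth_zero, Fin.tail_cons,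
      Fin.removeNth_succ_cons]
  calc ∫⁻ x, ∏ j, f j (j.removeNth x) ^ q ∂.pi (fun _ => μ)
      = ∫⁻ t, ∫⁻ y, f 0 y ^ q * ∏ i : Fin (k + 1), f i.succ (Fin.cons t (i.removeNth y)) ^ q
          ∂.pi (fun _ => μ) ∂μ := by
        rw [lintegral_pi_fin_succ (by fun_prop)]
        simp only [hsplit]
    _ ≤ ∫⁻ t, (∫⁻ y, f 0 y ∂.pi (fun _ => μ)) ^ q
          * ∏ i : Fin (k + 1), (∫⁻ z, f i.succ (Fin.cons t z) ∂.pi (fun _ => μ)) ^ q ∂μ :=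
        lintegral_mono fun t =>
          h.lintegral_rpow_mul_prod_le hk (hf 0) fun i => (hf i.succ).comp (by fun_prop)
    _ = (∫⁻ y, f 0 y ∂.pi (fun _ => μ)) ^ q
          * ∫⁻ t, ∏ i : Fin (k + 1),
              (∫⁻ z, f i.succ (Fin.cons t z) ∂.pi (fun _ => μ)) ^ q ∂μ :=
        lintegral_const_mul _ (by fun_prop)
    _ ≤ (∫⁻ y, f 0 y ∂.pi (fun _ => μ)) ^ q
          * ∏ i : Fin (k + 1),
              (∫⁻ t, ∫⁻ z, f i.succ (Fin.cons t z) ∂.pi (fun _ => μ) ∂μ) ^ q := by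
        gcongr
        refine lintegral_prod_norm_pow_le _ (fun i _ => by fun_prop) ?_ fun _ _ => by positivity
        simp [hq_def, mul_inv_cancel₀ (by positivity : (k : ℝ) + 1 ≠ 0)]
    _ = ∏ j, (∫⁻ y, f j y ∂.pi (fun _ => μ)) ^ q := by
        simp only [Fin.prod_univ_succ (n := k + 1), ← lintegral_pi_fin_succ (hf _)]

theorem loomisWhitneyIneq {k : ℕ} (hk : 1 ≤ k) : LoomisWhitneyIneq μ k := by
  induction k, hk using Nat.le_induction with
  | base => exact loomisWhitneyIneq_one
  | succ k hk ih => exact ih.succ (by omega)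

theorem measure_pow_le_prod_measure_of_removeNth_mem {k : ℕ} (hk : 1 ≤ k)
    {S : Set (Fin (k + 1) → α)} {T : Fin (k + 1) → Set (Fin k → α)}
    (hT : ∀ j, MeasurableSet (T j)) (hST : ∀ x ∈ S, ∀ j, j.removeNth x ∈ T j) :
    Measure.pi (fun _ => μ) S ^ k ≤ ∏ j, Measure.pi (fun _ => μ) (T j) := by
  set P : Set (Fin (k + 1) → α) := ⋂ j, (fun x => j.removeNth x) ⁻¹' T j
  have hP : MeasurableSet P := MeasurableSet.iInter fun j => measurable_removeNth j (hT j)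
  have hk0 : (k : ℝ) ≠ 0 := by positivity
  calc Measure.pi (fun _ => μ) S ^ k
      ≤ (∫⁻ x, P.indicator 1 x ∂.pi (fun _ => μ)) ^ k := by
        rw [lintegral_indicator_one hP]
        gcongr
        exact fun x hx => Set.mem_iInter.2 (hST x hx)
    _ ≤ (∫⁻ x, ∏ j, (T j).indicator 1 (j.removeNth x) ^ (k : ℝ)⁻¹
          ∂.pi (fun _ => μ)) ^ k := by
        gcongr with x
        by_cases hx : x ∈ P
        · simp_all [P]
        · simp [hx]
    _ ≤ (∏ j, Measure.pi (fun _ => μ) (T j) ^ (k : ℝ)⁻¹) ^ k := by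
        gcongr
        refine (loomisWhitneyIneq hk _ fun j => measurable_one.indicator (hT j)).trans_eq ?_
        simp only [lintegral_indicator_one (hT _)]
    _ = ∏ j, Measure.pi (fun _ => μ) (T j) := by
        rw [← Finset.prod_pow]
        simp only [← rpow_natCast, ← rpow_mul, inv_mul_cancel₀ hk0, rpow_one]

end LoomisWhitney

lemma Dm_eq_image (n m : ℕ) (K : Set (E n)) :
    Dm n m K = (fun p : E n × (Fin m → E n) => fun i => p.1 - p.2 i) ''
      (K ×ˢ Set.univ.pi fun _ => K) := by
  ext x
  simp only [Dm, Set.mem_ofPred_eq, Set.Nonempty, Set.mem_inter_iff, Set.mem_iInter,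
    Set.mem_vadd_set_iff_neg_vadd_mem, vadd_eq_add, neg_add_eq_sub, Set.mem_image, Set.mem_prod,
    Set.mem_pi, Set.mem_univ, true_implies, Prod.exists]
  constructor
  · rintro ⟨y, hy, hx⟩
    exact ⟨y, fun i => y - x i, ⟨hy, hx⟩, funext fun i => sub_sub_cancel _ _⟩
  · rintro ⟨y, z, ⟨hy, hz⟩, rfl⟩
    exact ⟨y, hy, fun i => by simpa using hz i⟩

lemma isCompact_Dm (n m : ℕ) {K : Set (E n)} (hK : IsCompact K) : IsCompact (Dm n m K) := by
  rw [Dm_eq_image]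
  exact (hK.prod (isCompact_univ_pi fun _ => hK)).image (by fun_prop)

lemma removeNth_mem_Dm {n m : ℕ} {K : Set (E n)} {x : Fin (m + 1) → E n}
    (hx : x ∈ Dm n (m + 1) K) (j : Fin (m + 1)) : j.removeNth x ∈ Dm n m K := by
  obtain ⟨y, hyK, hy⟩ := hx
  exact ⟨y, hyK, Set.mem_iInter.2 fun i => Set.mem_iInter.1 hy (j.succAbove i)⟩

theorem stmt19_general (n m : ℕ) (hm : 1 ≤ m) (K : Set (E n))
    (hKcpt : IsCompact K) :
    (volume (Dm n (m + 1) K)) ^ m ≤ (volume (Dm n m K)) ^ (m + 1) := by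
  have hD : MeasurableSet (Dm n m K) := (isCompact_Dm n m hKcpt).isClosed.measurableSet
  simpa [volume_pi] using measure_pow_le_prod_measure_of_removeNth_mem (μ := volume) hm
    (S := Dm n (m + 1) K) (fun _ => hD) fun _ hx j => removeNth_mem_Dm hx j

/-- Monotonicity in `m`: `vol(D^{m+1}K)^m ≤ vol(DᵐK)^{m+1}`, equivalently
`S_{n,m+1}(K)^m ≤ S_{n,m}(K)^{m+1}`. -/
theorem stmt19 (n m : ℕ) (hm : 1 ≤ m) (K : Set (E n))
    (hKcpt : IsCompact K) (hKcvx : Convex ℝ K) (hKint : (interior K).Nonempty) :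
    (volume (Dm n (m + 1) K)) ^ m ≤ (volume (Dm n m K)) ^ (m + 1) :=
  stmt19_general n m hm K hKcpt
end
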